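/- For λ > 0, λ·∫₀^∞ ∫_{π/3}^{2π/3} e^{-(λ/√3)·r²·sin²φ} · r² · sin φ dφ dr = (1/√λ) · (1/2) · 3^{1/4} · √π. -/

import Mathlib

/-!
Write `c = λ / √3`. Since `sin φ ≥ √3 / 2` on `[π/3, 2π/3]`, the integrand is dominated by
`r² e^{-(3c/4) r²}`, so the integrals may be swapped. The radial integral is then the Gaussian
moment `∫₀^∞ r² e^{-d r²} dr = √π / (4 d^{3/2})` with `d = c sin² φ`, which leaves
`√π / (4 c^{3/2}) ∫ csc² φ dφ = √π / (4 c^{3/2}) (cot (π/3) - cot (2π/3))`, and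
`cot (π/3) - cot (2π/3) = 2 / √3`.
-/

open Real MeasureTheory Set

lemma integral_Ioi_sq_mul_exp_neg_mul_sq {d : ℝ} (hd : 0 < d) :
    ∫ r in Ioi (0:ℝ), r ^ 2 * exp (-d * r ^ 2) = √π / (4 * d * √d) := by
  have h := integral_rpow_mul_exp_neg_mul_rpow two_pos (by norm_num : (-1:ℝ) < 2) hd
  simp only [rpow_two] at h
  rw [h, show ((2:ℝ) + 1) / 2 = 1 / 2 + 1 by norm_num, Gamma_add_one (by norm_num),
    Gamma_one_half_eq, show (-(2 + 1) / 2 : ℝ) = -(1 + 1 / 2) by norm_num, rpow_neg hd.le,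
    rpow_add hd, rpow_one, ← sqrt_eq_rpow]
  field_simp
  ring

lemma integral_inv_sin_sq {a b : ℝ} (h : ∀ x ∈ uIcc a b, sin x ≠ 0) :
    ∫ x in a..b, (sin x ^ 2)⁻¹ = cot a - cot b := by
  have hderiv : ∀ x ∈ uIcc a b, HasDerivAt (fun x => -(cos x / sin x)) (sin x ^ 2)⁻¹ x := by
    intro x hx
    have hs := h x hx
    refine (((hasDerivAt_cos x).div (hasDerivAt_sin x) hs).neg).congr_deriv ?_
    field_simp
    linear_combination sin_sq_add_cos_sq x
  have hint : IntervalIntegrable (fun x => (sin x ^ 2)⁻¹) volume a b :=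
    (continuousOn_sin.pow 2).inv₀ (fun x hx => pow_ne_zero 2 (h x hx)) |>.intervalIntegrable
  rw [intervalIntegral.integral_eq_sub_of_hasDerivAt hderiv hint, cot_eq_cos_div_sin,
    cot_eq_cos_div_sin]
  ring

lemma cot_pi_div_three_sub_cot_two_pi_div_three : cot (π / 3) - cot (2 * π / 3) = 2 / √3 := by
  have hsin : sin (2 * π / 3) = √3 / 2 := by
    rw [show 2 * π / 3 = π - π / 3 by ring, sin_pi_sub, sin_pi_div_three]
  have hcos : cos (2 * π / 3) = -(1 / 2) := by
    rw [show 2 * π / 3 = π - π / 3 by ring, cos_pi_sub, cos_pi_div_three]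
  rw [cot_eq_cos_div_sin, cot_eq_cos_div_sin, hsin, hcos, sin_pi_div_three, cos_pi_div_three]
  field_simp
  ring

lemma sqrt_three_div_two_le_sin {φ : ℝ} (hφ : φ ∈ Icc (π / 3) (2 * π / 3)) :
    √3 / 2 ≤ sin φ := by
  rw [← cos_sub_pi_div_two, ← cos_abs, ← cos_pi_div_six]
  apply cos_le_cos_of_nonneg_of_le_pi (abs_nonneg _) (by linarith [pi_pos])
  rw [abs_le]
  constructor <;> linarith [hφ.1, hφ.2]

lemma sqrt_sqrt_eq_rpow {x : ℝ} (hx : 0 ≤ x) : √(√x) = x ^ (1 / 4 : ℝ) := by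
  rw [sqrt_eq_rpow, sqrt_eq_rpow, ← rpow_mul hx]
  norm_num

section
variable {c a b s : ℝ}

lemma integral_Ioi_exp_neg_mul_sq_mul_sin_sq (hc : 0 < c) {φ : ℝ} (hφ : 0 < sin φ) :
    ∫ r in Ioi (0:ℝ), exp (-c * r ^ 2 * sin φ ^ 2) * r ^ 2 * sin φ
      = √π / (4 * c * √c) * (sin φ ^ 2)⁻¹ := by
  have hd : 0 < c * sin φ ^ 2 := by positivity
  simp_rw [show ∀ r : ℝ, exp (-c * r ^ 2 * sin φ ^ 2) * r ^ 2 * sin φ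
      = r ^ 2 * exp (-(c * sin φ ^ 2) * r ^ 2) * sin φ from fun r => by ring_nf]
  rw [integral_mul_const, integral_Ioi_sq_mul_exp_neg_mul_sq hd, sqrt_mul hc.le,
    sqrt_sq hφ.le]
  field_simp

lemma integrable_exp_neg_mul_sq_mul_sin_sq (hc : 0 < c) (hs : 0 < s)
    (hsin : ∀ φ ∈ Icc a b, s ≤ sin φ) :
    Integrable (Function.uncurry fun r φ => exp (-c * r ^ 2 * sin φ ^ 2) * r ^ 2 * sin φ)
      ((volume.restrict (Ioi 0)).prod (volume.restrict (Ioc a b))) := by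
  have hdom : IntegrableOn (fun r : ℝ => r ^ 2 * exp (-(c * s ^ 2) * r ^ 2)) (Ioi 0) := by
    simpa [rpow_two] using integrableOn_rpow_mul_exp_neg_mul_sq (by positivity : 0 < c * s ^ 2)
      (by norm_num : (-1:ℝ) < 2)
  refine (hdom.mul_prod (integrable_const (1:ℝ))).mono'
    (Continuous.aestronglyMeasurable (by fun_prop)) ?_
  rw [Measure.prod_restrict]
  filter_upwards [ae_restrict_mem (measurableSet_Ioi.prod measurableSet_Ioc)]
    with ⟨r, φ⟩ ⟨_, hφ⟩
  have hsφ := hsin φ ⟨hφ.1.le, hφ.2⟩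
  have hexp : exp (-c * r ^ 2 * sin φ ^ 2) ≤ exp (-(c * s ^ 2) * r ^ 2) := by
    have := mul_le_mul_of_nonneg_left (pow_le_pow_left₀ hs.le hsφ 2)
      (by positivity : 0 ≤ c * r ^ 2)
    exact exp_le_exp.mpr (by linarith)
  simp only [Function.uncurry_apply_pair, norm_mul, norm_of_nonneg (exp_nonneg _),
    norm_of_nonneg (sq_nonneg r), norm_of_nonneg (hs.le.trans hsφ), mul_one]
  calc exp (-c * r ^ 2 * sin φ ^ 2) * r ^ 2 * sin φ
      ≤ exp (-(c * s ^ 2) * r ^ 2) * r ^ 2 * 1 := by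
        gcongr
        exacts [hs.le.trans hsφ, sin_le_one φ]
    _ = r ^ 2 * exp (-(c * s ^ 2) * r ^ 2) := by ring

theorem integral_Ioi_integral_exp_neg_mul_sq_mul_sin_sq (hc : 0 < c) (hab : a ≤ b) (hs : 0 < s)
    (hsin : ∀ φ ∈ Icc a b, s ≤ sin φ) :
    ∫ r in Ioi (0:ℝ), ∫ φ in a..b, exp (-c * r ^ 2 * sin φ ^ 2) * r ^ 2 * sin φ
      = √π / (4 * c * √c) * (cot a - cot b) := by
  have hsin_pos : ∀ φ ∈ Icc a b, 0 < sin φ := fun φ hφ => hs.trans_le (hsin φ hφ)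
  simp_rw [intervalIntegral.integral_of_le hab]
  rw [integral_integral_swap (integrable_exp_neg_mul_sq_mul_sin_sq hc hs hsin),
    setIntegral_congr_fun measurableSet_Ioc fun φ hφ =>
      integral_Ioi_exp_neg_mul_sq_mul_sin_sq hc (hsin_pos φ ⟨hφ.1.le, hφ.2⟩),
    integral_const_mul, ← intervalIntegral.integral_of_le hab, integral_inv_sin_sq]
  intro φ hφ
  rw [uIcc_of_le hab] at hφ
  exact (hsin_pos φ hφ).ne'

end

theorem stmt_5 (l : ℝ) (hl : 0 < l) :
    l * ∫ r in Set.Ioi (0:ℝ), ∫ φ in (π/3)..(2*π/3),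
        Real.exp (-(l / Real.sqrt 3) * r^2 * Real.sin φ ^ 2) * r^2 * Real.sin φ
      = 1 / Real.sqrt l * (1/2) * (3:ℝ) ^ ((1:ℝ)/4) * Real.sqrt π := by
  rw [integral_Ioi_integral_exp_neg_mul_sq_mul_sin_sq (by positivity) (by linarith [pi_pos])
      (by positivity) fun φ hφ => sqrt_three_div_two_le_sin hφ,
    cot_pi_div_three_sub_cot_two_pi_div_three, sqrt_div hl.le, sqrt_sqrt_eq_rpow (by norm_num)]
  field_simp
  ring
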